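/- arXiv:math/0211377 — 2 statements merged into one kernel-verified Lean document; each statement's English description precedes it below -/
import Mathlib

section
/- Let V be a p-dimensional subspace of Poly_d (complex polynomials of degree at most d) with no common zero, and let W_V be its Wronskian (monic, the Wronskian of any basis up to scalar). Then deg W_V ≤ p(d+1−p). -/
open Polynomial

/-- The Wronskian determinant of a finite family of polynomials. -/
noncomputable def wronskianFin (p : ℕ) (f : Fin p → Polynomial ℂ) : Polynomial ℂ :=
  Matrix.det (Matrix.of fun i j : Fin p => (⇑Polynomial.derivative)^[(i : ℕ)] (f j))

/-!
Changing the basis of `V` multiplies the Wronskian by a constant, so its degree can be bounded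
in a basis `c₀, …, c_{p-1}` of `V` with pairwise distinct degrees; such a basis exists because
reading off the coefficients at the degrees occurring in `V` is injective on `V`. Multiplying
row `i` of the Wronskian matrix by `X ^ i` multiplies the determinant by `X ^ (0 + ⋯ + (p-1))`
and leaves every entry of column `j` of degree at most `deg c_j`, so
`deg W + (0 + ⋯ + (p-1)) ≤ ∑ deg c_j ≤ p d - (0 + ⋯ + (p-1))`,
i.e. `deg W ≤ p d - p (p-1)`.
-/

section DistinctDegrees

variable {K : Type*} [Field K]

theorem Polynomial.linearIndependent_of_natDegree_injective {ι : Type*} {c : ι → K[X]}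
    (hc : ∀ i, c i ≠ 0) (hinj : Function.Injective fun i => (c i).natDegree) :
    LinearIndependent K c := by
  classical
  rw [linearIndependent_iff']
  intro s
  induction s using Finset.induction_on_max_value (fun i => (c i).natDegree) with
  | empty => simp
  | insert a s has hmax ih =>
    intro g hsum
    have hlt : ∀ x ∈ s, (c x).natDegree < (c a).natDegree := fun x hx =>
      (hmax x hx).lt_of_ne fun h => has (hinj h ▸ hx)
    -- only `c a` reaches degree `deg (c a)`, so the sum's coefficient there is `g a * lc (c a)`
    have hga : g a = 0 := by
      have htop := congrArg (coeff · (c a).natDegree) hsum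
      simp only [Finset.sum_insert has, coeff_add, finsetSum_coeff, coeff_smul, coeff_natDegree,
        smul_eq_mul, coeff_zero] at htop
      rw [Finset.sum_eq_zero fun x hx => by rw [coeff_eq_zero_of_natDegree_lt (hlt x hx), mul_zero],
        add_zero] at htop
      exact (mul_eq_zero.mp htop).resolve_right (leadingCoeff_ne_zero.mpr (hc a))
    rw [Finset.sum_insert has, hga, zero_smul, zero_add] at hsum
    intro i hi
    rcases Finset.mem_insert.mp hi with rfl | hi
    · exact hga
    · exact ih g hsum i hi

theorem Submodule.exists_basis_natDegree_injective (V : Submodule K K[X]) [FiniteDimensional K V] :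
    ∃ c : Module.Basis (Fin (Module.finrank K V)) K V,
      Function.Injective fun i => (c i : K[X]).natDegree := by
  classical
  let S : Set ℕ := {n | ∃ f ∈ V, f ≠ 0 ∧ f.natDegree = n}
  choose f hfV hf0 hfdeg using fun n : S => n.2
  let e : S → V := fun n => ⟨f n, hfV n⟩
  have hinj : Function.Injective fun n => (f n).natDegree := fun m n h =>
    Subtype.ext (by simpa only [hfdeg] using h)
  have hli : LinearIndependent K e :=
    LinearIndependent.of_comp V.subtype (linearIndependent_of_natDegree_injective hf0 hinj)
  have : Fintype S := @Fintype.ofFinite _ hli.finite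
  have hcoeff : Function.Injective (LinearMap.pi fun n : S => (lcoeff K n).comp V.subtype) := by
    rw [← LinearMap.ker_eq_bot, Submodule.eq_bot_iff]
    intro v hv
    by_contra hv0
    have hvS : (v : K[X]).natDegree ∈ S := ⟨v, v.2, by simpa using hv0, rfl⟩
    exact hv0 (by simpa using congrFun (LinearMap.mem_ker.mp hv) ⟨_, hvS⟩)
  have hcard : Fintype.card S = Module.finrank K V := by
    refine le_antisymm hli.fintype_card_le_finrank ?_
    simpa using LinearMap.finrank_le_finrank_of_injective hcoeff
  refine ⟨(basisOfLinearIndependentOfCardEqFinrank' e hli hcard).reindex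
    (Fintype.equivFinOfCardEq hcard), ?_⟩
  simp only [Module.Basis.reindex_apply, coe_basisOfLinearIndependentOfCardEqFinrank']
  exact hinj.comp (Equiv.injective _)

end DistinctDegrees

theorem Polynomial.natDegree_det_le_sum_of_col_le {R n : Type*} [CommRing R] [Fintype n]
    [DecidableEq n] (M : Matrix n n R[X]) (f : n → ℕ)
    (h : ∀ i j, (M i j).natDegree ≤ f j) : M.det.natDegree ≤ ∑ j, f j := by
  rw [Matrix.det_apply']
  refine natDegree_sum_le_of_forall_le _ _ fun σ _ => natDegree_mul_le.trans ?_
  rw [natDegree_intCast, zero_add]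
  exact (natDegree_prod_le _ _).trans (Finset.sum_le_sum fun i _ => h (σ i) i)

theorem Polynomial.natDegree_X_pow_mul_iterate_derivative_le {R : Type*} [Semiring R]
    (f : R[X]) (i : ℕ) : (X ^ i * derivative^[i] f).natDegree ≤ f.natDegree := by
  rcases lt_or_ge f.natDegree i with hlt | hle
  · simp [iterate_derivative_eq_zero hlt]
  · calc (X ^ i * derivative^[i] f).natDegree
        ≤ i + (f.natDegree - i) := natDegree_mul_le.trans
          (add_le_add (natDegree_X_pow_le i) (natDegree_iterate_derivative f i))
      _ = f.natDegree := by omega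

theorem wronskianFin_sum_smul (p : ℕ) (A : Matrix (Fin p) (Fin p) ℂ) (c : Fin p → ℂ[X]) :
    wronskianFin p (fun j => ∑ k, A k j • c k) = C A.det * wronskianFin p c := by
  have hmul : (Matrix.of fun i j : Fin p => derivative^[i] (∑ k, A k j • c k)) =
      (Matrix.of fun i j : Fin p => derivative^[i] (c j)) * C.mapMatrix A := by
    ext1 i j
    rw [Matrix.of_apply, iterate_derivative_sum, Matrix.mul_apply]
    refine Finset.sum_congr rfl fun k _ => ?_
    rw [iterate_derivative_smul, smul_eq_C_mul, mul_comm]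
    rfl
  rw [wronskianFin, wronskianFin, hmul, Matrix.det_mul, RingHom.map_det, mul_comm]

theorem natDegree_wronskianFin_le (p : ℕ) (c : Fin p → ℂ[X]) :
    (wronskianFin p c).natDegree ≤ ∑ j, (c j).natDegree - ∑ i : Fin p, (i : ℕ) := by
  by_cases hW : wronskianFin p c = 0
  · simp [hW]
  have hscaled := Matrix.det_mul_column (fun i : Fin p => (X : ℂ[X]) ^ (i : ℕ))
    (Matrix.of fun i j : Fin p => derivative^[i] (c j))
  simp only [Matrix.of_apply, Finset.prod_pow_eq_pow_sum] at hscaled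
  rw [← wronskianFin] at hscaled
  have hle := natDegree_det_le_sum_of_col_le
    (Matrix.of fun i j : Fin p => X ^ (i : ℕ) * derivative^[i] (c j)) (fun j => (c j).natDegree)
    fun i j => natDegree_X_pow_mul_iterate_derivative_le (c j) i
  rw [hscaled, natDegree_mul (pow_ne_zero _ X_ne_zero) hW, natDegree_X_pow] at hle
  omega

theorem Fin.sum_add_sum_val_le_mul_of_injective {p d : ℕ} (g : Fin p → ℕ)
    (hg : Function.Injective g) (hd : ∀ j, g j ≤ d) :
    ∑ j, g j + ∑ j : Fin p, (j : ℕ) ≤ p * d := by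
  have hcast : Function.Injective fun j => (g j : ℤ) := Nat.cast_injective.comp hg
  have key := Finset.sum_le_sum_range (s := Finset.univ.image fun j => (g j : ℤ)) (c := d)
    (by simpa using fun j => hd j)
  rw [Finset.card_image_of_injective _ hcast, Finset.sum_image fun _ _ _ _ h => hcast h,
    Finset.card_univ, Fintype.card_fin, Finset.sum_sub_distrib] at key
  rw [Fin.sum_univ_eq_sum_range (fun j => j)]
  zify
  simp only [Finset.sum_const, Finset.card_range, Int.nsmul_eq_mul] at key
  linarith

theorem stmt9_general (p d : ℕ)
    (V : Submodule ℂ (Polynomial ℂ))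
    (hdim : Module.finrank ℂ V = p)
    (hdeg : ∀ f ∈ V, f.natDegree ≤ d)
    (b : Module.Basis (Fin p) ℂ V) :
    (wronskianFin p (fun i => (b i : Polynomial ℂ))).natDegree ≤ p * (d + 1 - p) := by
  have : FiniteDimensional ℂ V := Module.Finite.of_basis b
  subst hdim
  obtain ⟨c, hc⟩ := V.exists_basis_natDegree_injective
  have hb : (fun j => (b j : ℂ[X])) = fun j => ∑ k, c.toMatrix b k j • (c k : ℂ[X]) := by
    ext1 j
    simp_rw [← Submodule.coe_smul, ← Submodule.coe_sum, c.sum_toMatrix_smul_self]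
  have hbc : (wronskianFin _ fun j => (b j : ℂ[X])).natDegree ≤
      (wronskianFin _ fun j => (c j : ℂ[X])).natDegree := by
    rw [hb, wronskianFin_sum_smul]
    exact natDegree_C_mul_le _ _
  have hW := natDegree_wronskianFin_le _ fun j => (c j : ℂ[X])
  have hdegs := Fin.sum_add_sum_val_le_mul_of_injective _ hc fun j => hdeg _ (c j).2
  have hgauss := Finset.sum_range_id_mul_two (Module.finrank ℂ V)
  rw [← Fin.sum_univ_eq_sum_range (fun j => j)] at hgauss
  rw [Nat.mul_sub, mul_one] at hgauss
  rw [Nat.mul_sub, mul_add, mul_one]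
  have := Nat.le_mul_self (Module.finrank ℂ V)
  omega

/-- If `V` is a `p`-dimensional subspace of `Poly_d` with no common zero, then the
Wronskian of (any basis of) `V` has degree at most `p(d+1−p)`. -/
theorem stmt9 (p d : ℕ) (hp : 1 ≤ p) (hpd : p ≤ d + 1)
    (V : Submodule ℂ (Polynomial ℂ))
    (hdim : Module.finrank ℂ V = p)
    (hdeg : ∀ f ∈ V, f.natDegree ≤ d)
    (hnocz : ¬ ∃ x : ℂ, ∀ f ∈ V, Polynomial.eval x f = 0)
    (b : Module.Basis (Fin p) ℂ V) :
    (wronskianFin p (fun i => (b i : Polynomial ℂ))).natDegree ≤ p * (d + 1 - p) :=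
  stmt9_general p d V hdim hdeg b
end

section
/- Let V be a p-dimensional space of complex polynomials and suppose every element of a basis P_1,...,P_p has a root at z of multiplicity at least ρ_1 > ρ_2 > ... > ρ_p ≥ 0 respectively (P_l vanishes to order ≥ ρ_l at z). Then the Wronskian W(P_1,...,P_p) has a root at z of multiplicity at least ρ_1 + ... + ρ_p − p(p−1)/2. -/
/-!
Expand the Wronskian as a sum over permutations `σ`. The `i`-th derivative of `P_j` is divisible
by `(X - z)^(ρ_j - i)`, so the term of `σ` is divisible by `(X - z)` to the power
`∑ (ρ_j - σ j) ≥ ∑ ρ_j - ∑ i = ∑ ρ_j - p(p-1)/2`.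
-/

open Polynomial

theorem Fintype.sum_tsub_sum_le_sum_tsub_comp_perm {ι α : Type*} [Fintype ι]
    [AddCommMonoid α] [PartialOrder α] [IsOrderedAddMonoid α] [Sub α] [OrderedSub α]
    (σ : Equiv.Perm ι) (r c : ι → α) : ∑ j, c j - ∑ i, r i ≤ ∑ j, (c j - r (σ j)) := by
  rw [← Equiv.sum_comp σ r, tsub_le_iff_right, ← Finset.sum_add_distrib]
  exact Finset.sum_le_sum fun j _ => le_tsub_add

theorem Matrix.pow_sub_dvd_det {R ι : Type*} [CommRing R] [Fintype ι] [DecidableEq ι]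
    (M : Matrix ι ι R) (a : R) (r c : ι → ℕ) (h : ∀ i j, a ^ (c j - r i) ∣ M i j) :
    a ^ (∑ j, c j - ∑ i, r i) ∣ M.det := by
  rw [Matrix.det_apply']
  refine Finset.dvd_sum fun σ _ => Dvd.dvd.mul_left ?_ _
  calc a ^ (∑ j, c j - ∑ i, r i)
      ∣ a ^ ∑ j, (c j - r (σ j)) :=
        pow_dvd_pow a (Fintype.sum_tsub_sum_le_sum_tsub_comp_perm σ r c)
    _ = ∏ j, a ^ (c j - r (σ j)) := (Finset.prod_pow_eq_pow_sum _ _ _).symm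
    _ ∣ ∏ j, M (σ j) j := Finset.prod_dvd_prod_of_dvd _ _ fun j _ => h (σ j) j

theorem stmt11_general (p : ℕ) (P : Fin p → Polynomial ℂ) (ρ : Fin p → ℕ) (z : ℂ)
    (hvan : ∀ l, (X - C z) ^ (ρ l) ∣ P l) :
    (X - C z) ^ ((∑ l : Fin p, ρ l) - p * (p - 1) / 2) ∣ wronskianFin p P := by
  have h := Matrix.pow_sub_dvd_det _ (X - C z) (fun i : Fin p => (i : ℕ)) ρ
    fun i j => pow_sub_dvd_iterate_derivative_of_pow_dvd (i : ℕ) (hvan j)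
  rwa [Fin.sum_univ_eq_sum_range (fun i => i) p, Finset.sum_range_id] at h

/-- If `P_l` vanishes at `z` to order at least `ρ_l`, with `ρ₁ > ρ₂ > … > ρ_p ≥ 0`, then
the Wronskian of `P₁,…,P_p` vanishes at `z` to order at least `ρ₁+…+ρ_p − p(p−1)/2`. -/
theorem stmt11 (p : ℕ) (P : Fin p → Polynomial ℂ) (ρ : Fin p → ℕ) (z : ℂ)
    (hanti : StrictAnti ρ)
    (hvan : ∀ l, (X - C z) ^ (ρ l) ∣ P l) :
    (X - C z) ^ ((∑ l : Fin p, ρ l) - p * (p - 1) / 2) ∣ wronskianFin p P :=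
  stmt11_general p P ρ z hvan
end
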